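/- arXiv:1409.5411 — 5 statements merged into one kernel-verified Lean document; each statement's English description precedes it below -/
import Mathlib

section
/- Let Σ(P) be a positive system for Σ. The following are equivalent: (a) Σ(P) is q-extreme, i.e. Σ(P,σθ) = Σ(P) \ 𝔞_h*; (b) there exists Y ∈ 𝔞_q such that α(Y) ≠ 0 for every α ∈ Σ \ 𝔞_h*, and {α ∈ Σ : α(Y) > 0} ⊆ Σ(P). (Condition (b) expresses, in terms of root sets, that the minimal parabolic subgroup P is contained in some minimal σθ-stable parabolic subgroup P₀ ∈ 𝒫_σ(A_q).) -/
/-- `P` is a positive system for the root set `S`: there is `X ∈ V` on which no root of `S`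
vanishes, such that `P` is the set of roots of `S` that are positive on `X`. -/
def IsPosSystem {V : Type*} [AddCommGroup V] [Module ℝ V]
    (S P : Set (V →ₗ[ℝ] ℝ)) : Prop :=
  ∃ X : V, (∀ α ∈ S, α X ≠ 0) ∧ P = {α | α ∈ S ∧ 0 < α X}

/-- `Σ(P, σθ) = Σ(P) ∩ σθ·Σ(P)`, where `σθ` acts on functionals by `λ ↦ -(λ ∘ σ)`. -/
def rootsSigmaTheta {V : Type*} [AddCommGroup V] [Module ℝ V]
    (σ : V →ₗ[ℝ] V) (P : Set (V →ₗ[ℝ] ℝ)) : Set (V →ₗ[ℝ] ℝ) :=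
  P ∩ ((fun α => -(α.comp σ)) '' P)

/-- `𝔞_h* = {λ : λ ∘ σ = λ}`, the functionals fixed by `σ`. -/
def ahStar {V : Type*} [AddCommGroup V] [Module ℝ V] (σ : V →ₗ[ℝ] V) :
    Set (V →ₗ[ℝ] ℝ) :=
  {l | l.comp σ = l}

/-- `𝔞_q`, the `-1` eigenspace of `σ` on `V`. -/
def aqSet {V : Type*} [AddCommGroup V] [Module ℝ V] (σ : V →ₗ[ℝ] V) : Set V :=
  {X | σ X = -X}

/-- A positive system `Σ(P)` is q-extreme, i.e. `Σ(P,σθ) = Σ(P) \ 𝔞_h*`, if and only if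
there is `Y ∈ 𝔞_q` with `α(Y) ≠ 0` for every `α ∈ Σ \ 𝔞_h*` and
`{α ∈ Σ : α(Y) > 0} ⊆ Σ(P)`. -/
theorem qExtreme_iff_exists_Y
    {V : Type*} [AddCommGroup V] [Module ℝ V] [FiniteDimensional ℝ V]
    (σ : V →ₗ[ℝ] V) (hσ : ∀ X, σ (σ X) = X)
    (S : Set (V →ₗ[ℝ] ℝ)) (hSfin : S.Finite) (hS0 : (0 : V →ₗ[ℝ] ℝ) ∉ S)
    (hSneg : ∀ α ∈ S, -α ∈ S) (hSσ : ∀ α ∈ S, α.comp σ ∈ S)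
    (P : Set (V →ₗ[ℝ] ℝ)) (hP : IsPosSystem S P) :
    rootsSigmaTheta σ P = P \ ahStar σ ↔
      ∃ Y ∈ aqSet σ, (∀ α ∈ S \ ahStar σ, α Y ≠ 0) ∧
        {α | α ∈ S ∧ 0 < α Y} ⊆ P := by
  obtain ⟨X, hX, rfl⟩ := hP
  have himg : ∀ α : V →ₗ[ℝ] ℝ,
      (α ∈ (fun β : V →ₗ[ℝ] ℝ => -(β.comp σ)) '' {α | α ∈ S ∧ 0 < α X}) ↔
        (-(α.comp σ) ∈ {α | α ∈ S ∧ 0 < α X}) := by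
    intro α
    constructor
    · rintro ⟨β, hβ, hβα⟩
      have hβeq : β = -(α.comp σ) := by
        ext y
        have h2 := LinearMap.congr_fun hβα (σ y)
        simp only [LinearMap.neg_apply, LinearMap.comp_apply, hσ] at h2 ⊢
        linarith
      rwa [hβeq] at hβ
    · intro h
      refine ⟨-(α.comp σ), h, ?_⟩
      ext y
      simp [hσ]
  have hnotboth : ∀ α : V →ₗ[ℝ] ℝ, α ∈ {α | α ∈ S ∧ 0 < α X} →
      -α ∈ {α | α ∈ S ∧ 0 < α X} → False := by
    rintro α ⟨-, h1⟩ ⟨-, h2⟩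
    simp only [LinearMap.neg_apply] at h2
    linarith
  constructor
  · intro h
    have key : ∀ α, α ∈ {α | α ∈ S ∧ 0 < α X} → α ∉ ahStar σ → 0 < α (X - σ X) := by
      intro α hα hna
      have hmem : α ∈ rootsSigmaTheta σ {α | α ∈ S ∧ 0 < α X} := by
        rw [h]; exact ⟨hα, hna⟩
      have h2 : -(α.comp σ) ∈ {α | α ∈ S ∧ 0 < α X} := (himg α).mp hmem.2
      have h3 := h2.2
      have h4 := hα.2
      simp only [LinearMap.neg_apply, LinearMap.comp_apply] at h3
      rw [map_sub]
      linarith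
    have dich : ∀ α ∈ S, α ∉ ahStar σ →
        (α ∈ {α | α ∈ S ∧ 0 < α X} ∧ 0 < α (X - σ X)) ∨
        (-α ∈ {α | α ∈ S ∧ 0 < α X} ∧ α (X - σ X) < 0) := by
      intro α hαS hna
      rcases lt_or_gt_of_ne (hX α hαS) with hneg | hpos
      · right
        have hnegmem : -α ∈ {α | α ∈ S ∧ 0 < α X} := by
          refine ⟨hSneg α hαS, ?_⟩
          simp only [LinearMap.neg_apply]; linarith
        have hnna : -α ∉ ahStar σ := by
          intro hc
          apply hna
          have : (-α).comp σ = -α := hc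
          have : -(α.comp σ) = -α := by rwa [LinearMap.neg_comp] at this
          exact neg_injective this
        have := key (-α) hnegmem hnna
        simp only [LinearMap.neg_apply] at this
        exact ⟨hnegmem, by linarith⟩
      · left
        exact ⟨⟨hαS, hpos⟩, key α ⟨hαS, hpos⟩ hna⟩
    refine ⟨X - σ X, ?_, ?_, ?_⟩
    · show σ (X - σ X) = -(X - σ X)
      rw [map_sub, hσ, neg_sub]
    · intro α hα
      rcases dich α hα.1 hα.2 with ⟨-, h1⟩ | ⟨-, h1⟩
      · linarith
      · linarith
    · rintro α ⟨hαS, hαY⟩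
      have hna : α ∉ ahStar σ := by
        intro hc
        have hc' : α (σ X) = α X := LinearMap.congr_fun hc X
        rw [map_sub, hc'] at hαY
        linarith
      rcases dich α hαS hna with ⟨h1, -⟩ | ⟨-, h2⟩
      · exact h1
      · linarith
  · rintro ⟨Y, hYq, hY, hYP⟩
    have hYeq : σ Y = -Y := hYq
    apply Set.Subset.antisymm
    · rintro α ⟨hαP, hαimg⟩
      refine ⟨hαP, ?_⟩
      intro hc
      have h2 : -(α.comp σ) ∈ {α | α ∈ S ∧ 0 < α X} := (himg α).mp hαimg
      rw [show (α.comp σ) = α from hc] at h2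
      exact hnotboth α hαP h2
    · rintro α ⟨hαP, hna⟩
      refine ⟨hαP, (himg α).mpr ?_⟩
      have hαYne : α Y ≠ 0 := hY α ⟨hαP.1, hna⟩
      have hαYpos : 0 < α Y := by
        rcases lt_or_gt_of_ne hαYne with hneg | hpos
        · exfalso
          have : -α ∈ {α | α ∈ S ∧ 0 < α Y} := by
            refine ⟨hSneg α hαP.1, ?_⟩
            simp only [LinearMap.neg_apply]; linarith
          exact hnotboth α hαP (hYP this)
        · exact hpos
      refine hYP ⟨hSneg _ (hSσ α hαP.1), ?_⟩
      simp only [LinearMap.neg_apply, LinearMap.comp_apply, hYeq, map_neg]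
      linarith
end

section
/- Let Σ(P) be a positive system for Σ. Then there exists X ∈ 𝔞_q such that (a) α(X) ≠ 0 for all α ∈ Σ(P) \ 𝔞_h*, and (b) α(X) > 0 for all α ∈ Σ(P,σθ). -/
open Filter Topology


/-- A finite set of nonzero linear functionals has a common non-vanishing point. -/
lemma exists_forall_apply_ne_zero {V : Type*} [AddCommGroup V] [Module ℝ V]
    (F : Set (V →ₗ[ℝ] ℝ)) (hF : F.Finite) (h0 : (0 : V →ₗ[ℝ] ℝ) ∉ F) :
    ∃ w : V, ∀ f ∈ F, f w ≠ 0 := by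
  classical
  by_contra h
  push_neg at h
  have hcov : ⋃ p ∈ hF.toFinset.image LinearMap.ker, (p : Set V) = Set.univ := by
    ext w
    simp only [Set.mem_univ, iff_true, Set.mem_iUnion]
    obtain ⟨f, hf, hfw⟩ := h w
    exact ⟨LinearMap.ker f, Finset.mem_image_of_mem _ (hF.mem_toFinset.2 hf), hfw⟩
  have htop := Subspace.top_mem_of_biUnion_eq_univ hcov
  obtain ⟨f, hf, hker⟩ := Finset.mem_image.1 htop
  have : f = 0 := LinearMap.ker_eq_top.mp hker
  exact h0 (this ▸ hF.mem_toFinset.1 hf)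

/-- For every positive system `Σ(P)` there exists `X ∈ 𝔞_q` with `α(X) ≠ 0` for all
`α ∈ Σ(P) \ 𝔞_h*` and `α(X) > 0` for all `α ∈ Σ(P,σθ)`. -/
theorem exists_regular_aq_element
    {V : Type*} [AddCommGroup V] [Module ℝ V] [FiniteDimensional ℝ V]
    (σ : V →ₗ[ℝ] V) (hσ : ∀ X, σ (σ X) = X)
    (S : Set (V →ₗ[ℝ] ℝ)) (hSfin : S.Finite) (hS0 : (0 : V →ₗ[ℝ] ℝ) ∉ S)
    (hSneg : ∀ α ∈ S, -α ∈ S) (hSσ : ∀ α ∈ S, α.comp σ ∈ S)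
    (P : Set (V →ₗ[ℝ] ℝ)) (hP : IsPosSystem S P) :
    ∃ X ∈ aqSet σ, (∀ α ∈ P \ ahStar σ, α X ≠ 0) ∧
      ∀ α ∈ rootsSigmaTheta σ P, 0 < α X := by
  classical
  obtain ⟨X₀, hreg, hPdef⟩ := hP
  have hPsub : P ⊆ S := by rw [hPdef]; exact fun α hα => hα.1
  have hPpos : ∀ α ∈ P, 0 < α X₀ := by rw [hPdef]; exact fun α hα => hα.2
  -- the projection of X₀ onto 𝔞_q
  set Y : V := (2:ℝ)⁻¹ • (X₀ - σ X₀) with hYdef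
  have hσY : σ Y = -Y := by
    simp only [hYdef, map_smul, map_sub, hσ, ← smul_neg, neg_sub]
  -- a point of 𝔞_q where no root outside 𝔞_h* vanishes
  set F : Set (V →ₗ[ℝ] ℝ) := (fun α => α - α.comp σ) '' (S \ ahStar σ) with hFdef
  have hFfin : F.Finite := (hSfin.subset Set.diff_subset).image _
  have hF0 : (0 : V →ₗ[ℝ] ℝ) ∉ F := by
    rintro ⟨α, hα, hα0⟩
    rw [sub_eq_zero] at hα0
    exact hα.2 hα0.symm
  obtain ⟨w, hw⟩ := exists_forall_apply_ne_zero F hFfin hF0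
  set Z : V := w - σ w with hZdef
  have hσZ : σ Z = -Z := by simp only [hZdef, map_sub, hσ, neg_sub]
  have hZne : ∀ α ∈ S \ ahStar σ, α Z ≠ 0 := by
    intro α hα
    have := hw _ ⟨α, hα, rfl⟩
    simpa [hZdef] using this
  have hTfin : (rootsSigmaTheta σ P).Finite :=
    (hSfin.subset hPsub).subset Set.inter_subset_left
  have hDfin : (P \ ahStar σ).Finite := (hSfin.subset hPsub).subset Set.diff_subset
  -- roots in Σ(P,σθ) are positive on Y, and are not in 𝔞_h*
  have hTval : ∀ α ∈ rootsSigmaTheta σ P, 0 < α Y ∧ α ∈ P \ ahStar σ := by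
    rintro α ⟨hαP, β, hβP, hβα⟩
    have hασ : ∀ v, α (σ v) = -β v := by
      intro v
      rw [← hβα]
      simp [hσ]
    have hαY : α Y = (2:ℝ)⁻¹ * (α X₀ + β X₀) := by
      simp only [hYdef, map_smul, map_sub, hασ X₀, smul_eq_mul, sub_neg_eq_add]
    have h1 := hPpos α hαP
    have h2 := hPpos β hβP
    refine ⟨by rw [hαY]; linarith, hαP, fun hfix => ?_⟩
    have h3 : α X₀ = -β X₀ := by
      rw [← hασ X₀]; exact (LinearMap.congr_fun hfix X₀).symm
    linarith
  -- choose a good perturbation parameter ε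
  have hEv1 : ∀ᶠ ε in 𝓝 (0:ℝ), ∀ α ∈ rootsSigmaTheta σ P, 0 < α Y + ε * α Z := by
    rw [hTfin.eventually_all]
    intro α hα
    have hc : Continuous (fun ε : ℝ => α Y + ε * α Z) := by fun_prop
    have ht : Tendsto (fun ε : ℝ => α Y + ε * α Z) (𝓝 0) (𝓝 (α Y)) := by
      have := hc.tendsto (0:ℝ)
      simpa using this
    exact ht.eventually (eventually_gt_nhds (hTval α hα).1)
  have hEv2 : ∀ᶠ ε in 𝓝[≠] (0:ℝ), ∀ α ∈ P \ ahStar σ, α Y + ε * α Z ≠ 0 := by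
    rw [hDfin.eventually_all]
    intro α hα
    have hz : α Z ≠ 0 := hZne α ⟨hPsub hα.1, hα.2⟩
    have hb : ∀ᶠ ε in 𝓝[≠] (0:ℝ), ε ≠ -(α Y) / α Z := by
      by_cases hb0 : -(α Y) / α Z = 0
      · rw [hb0]
        exact eventually_mem_nhdsWithin
      · exact nhdsWithin_le_nhds (eventually_ne_nhds (Ne.symm hb0))
    refine hb.mono fun ε hε h0 => hε ?_
    field_simp
    linarith
  obtain ⟨ε, hε1, hε2⟩ := ((hEv1.filter_mono nhdsWithin_le_nhds).and hEv2).exists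
  refine ⟨Y + ε • Z, ?_, ?_, ?_⟩
  · show σ (Y + ε • Z) = -(Y + ε • Z)
    rw [map_add, hσY, map_smul, hσZ, smul_neg, neg_add]
  · intro α hα
    have := hε2 α hα
    simpa [map_add, map_smul, smul_eq_mul] using this
  · intro α hα
    have := hε1 α hα
    simpa [map_add, map_smul, smul_eq_mul] using this
end

section
/- If α : 𝔞 → ℝ is a nonzero linear functional that vanishes on 𝔞_q, then the root space 𝔤_α is contained in 𝔥, the +1 eigenspace of σ. -/
/-- If `α : 𝔞 → ℝ` is a nonzero linear functional vanishing on `𝔞_q = 𝔞 ∩ 𝔮`, then the root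
space `𝔤_α = {X : ⁅H,X⁆ = α(H) • X for all H ∈ 𝔞}` is contained in `𝔥`, the `+1` eigenspace
of `σ`. Here `θ, σ` are commuting involutive automorphisms of the finite-dimensional real Lie
algebra `L`, `𝔞` is a `σ`-invariant abelian subspace of `𝔭 = {X : θX = -X}`, and
`𝔞_q` is maximal abelian in `𝔭 ∩ 𝔮` where `𝔮 = {X : σX = -X}`. -/
theorem rootSpace_subset_h
    {L : Type*} [LieRing L] [LieAlgebra ℝ L] [FiniteDimensional ℝ L]
    (θ σ : L →ₗ⁅ℝ⁆ L)
    (hθ : ∀ X, θ (θ X) = X) (hσ : ∀ X, σ (σ X) = X)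
    (hcomm : ∀ X, θ (σ X) = σ (θ X))
    (a : Submodule ℝ L)
    (ha_p : ∀ X ∈ a, θ X = -X)
    (ha_σinv : ∀ X ∈ a, σ X ∈ a)
    (ha_ab : ∀ X ∈ a, ∀ Y ∈ a, ⁅X, Y⁆ = 0)
    (haq_max : ∀ b : Submodule ℝ L,
      (∀ X ∈ b, θ X = -X) → (∀ X ∈ b, σ X = -X) →
      (∀ X ∈ b, ∀ Y ∈ b, ⁅X, Y⁆ = 0) →
      {X | X ∈ a ∧ σ X = -X} ⊆ (b : Set L) →
      (b : Set L) = {X | X ∈ a ∧ σ X = -X})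
    (α : a →ₗ[ℝ] ℝ) (hα_ne : α ≠ 0)
    (hα_van : ∀ H : a, σ (H : L) = -(H : L) → α H = 0) :
    ∀ X : L, (∀ H : a, ⁅(H : L), X⁆ = α H • X) → σ X = X := by
  intro X hX
  -- α ∘ σ = α on a
  have hασ : ∀ H : a, α ⟨σ (H : L), ha_σinv _ H.2⟩ = α H := by
    intro H
    have hmem : σ (H : L) ∈ a := ha_σinv _ H.2
    have hvan : α (H - ⟨σ (H : L), hmem⟩) = 0 := by
      apply hα_van
      have : ((H - ⟨σ (H : L), hmem⟩ : a) : L) = (H : L) - σ (H : L) := rfl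
      rw [this, map_sub, hσ]
      abel
    rw [map_sub] at hvan
    linarith
  set Z : L := X - σ X with hZdef
  -- Z is in the root space
  have hZ : ∀ H : a, ⁅(H : L), Z⁆ = α H • Z := by
    intro H
    have h1 : ⁅(H : L), σ X⁆ = α H • σ X := by
      have : ⁅(H : L), σ X⁆ = σ ⁅σ (H : L), X⁆ := by
        rw [LieHom.map_lie, hσ]
      rw [this, hX ⟨σ (H : L), ha_σinv _ H.2⟩, map_smul, hασ]
    rw [hZdef, lie_sub, hX, h1, smul_sub]
  have hσZ : σ Z = -Z := by
    rw [hZdef, map_sub, hσ]; abel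
  set Y : L := Z - θ Z with hYdef
  have hθY : θ Y = -Y := by rw [hYdef, map_sub, hθ]; abel
  have hσY : σ Y = -Y := by
    rw [hYdef, map_sub, hσZ, ← hcomm, hσZ, map_neg]; abel
  -- θ Z is in the root space for -α
  have hθZ : ∀ H : a, ⁅(H : L), θ Z⁆ = -(α H • θ Z) := by
    intro H
    have : ⁅(H : L), θ Z⁆ = θ ⁅θ (H : L), Z⁆ := by rw [LieHom.map_lie, hθ]
    rw [this, ha_p _ H.2, neg_lie, hZ, map_neg, map_smul]
  -- Y commutes with a_q
  have hYcomm : ∀ H : a, σ (H : L) = -(H : L) → ⁅(H : L), Y⁆ = 0 := by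
    intro H hHq
    rw [hYdef, lie_sub, hZ, hθZ, hα_van H hHq]
    simp
  -- the submodule a_q
  let aq : Submodule ℝ L :=
    { carrier := {x | x ∈ a ∧ σ x = -x}
      add_mem' := fun hx hy => ⟨a.add_mem hx.1 hy.1, by rw [map_add, hx.2, hy.2, neg_add]⟩
      zero_mem' := ⟨a.zero_mem, by simp⟩
      smul_mem' := fun c x hx => ⟨a.smul_mem c hx.1, by rw [map_smul, hx.2, smul_neg]⟩ }
  have haq_mem : ∀ x : L, x ∈ aq ↔ x ∈ a ∧ σ x = -x := fun x => Iff.rfl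
  -- the submodule b = aq ⊔ ℝ∙Y
  set b : Submodule ℝ L := aq ⊔ (ℝ ∙ Y) with hbdef
  have hb_elt : ∀ x ∈ b, ∃ u ∈ aq, ∃ c : ℝ, x = u + c • Y := by
    intro x hx
    rw [hbdef, Submodule.mem_sup] at hx
    obtain ⟨u, hu, v, hv, huv⟩ := hx
    rw [Submodule.mem_span_singleton] at hv
    obtain ⟨c, hc⟩ := hv
    exact ⟨u, hu, c, by rw [← huv, hc]⟩
  have hb1 : ∀ x ∈ b, θ x = -x := by
    intro x hx
    obtain ⟨u, hu, c, rfl⟩ := hb_elt x hx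
    rw [map_add, map_smul, hθY, ha_p _ hu.1]
    module
  have hb2 : ∀ x ∈ b, σ x = -x := by
    intro x hx
    obtain ⟨u, hu, c, rfl⟩ := hb_elt x hx
    rw [map_add, map_smul, hσY, hu.2]
    module
  have hb3 : ∀ x ∈ b, ∀ y ∈ b, ⁅x, y⁆ = 0 := by
    intro x hx y hy
    obtain ⟨u, hu, c, rfl⟩ := hb_elt x hx
    obtain ⟨v, hv, d, rfl⟩ := hb_elt y hy
    have huY : ⁅u, Y⁆ = 0 := hYcomm ⟨u, hu.1⟩ hu.2
    have hvY : ⁅v, Y⁆ = 0 := hYcomm ⟨v, hv.1⟩ hv.2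
    have hYv : ⁅Y, v⁆ = 0 := by rw [← lie_skew, hvY, neg_zero]
    rw [add_lie, lie_add, lie_add, lie_smul, lie_smul, smul_lie, smul_lie,
      ha_ab u hu.1 v hv.1, huY, hYv, lie_self]
    simp
  have hb4 : {X | X ∈ a ∧ σ X = -X} ⊆ (b : Set L) := by
    intro x hx
    exact Submodule.mem_sup_left (show x ∈ aq from hx)
  have hbeq := haq_max b hb1 hb2 hb3 hb4
  have hYmem : Y ∈ b := Submodule.mem_sup_right (Submodule.mem_span_singleton_self Y)
  have hYaq : Y ∈ a ∧ σ Y = -Y := by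
    have : Y ∈ (b : Set L) := hYmem
    rw [hbeq] at this
    exact this
  -- pick H₀ with α H₀ ≠ 0
  obtain ⟨H₀, hH₀⟩ : ∃ H : a, α H ≠ 0 := by
    by_contra hc
    push_neg at hc
    exact hα_ne (LinearMap.ext fun H => by simpa using hc H)
  have hbrack : ⁅(H₀ : L), Y⁆ = 0 := ha_ab _ H₀.2 Y hYaq.1
  have hbrack2 : ⁅(H₀ : L), Y⁆ = α H₀ • (Z + θ Z) := by
    rw [hYdef, lie_sub, hZ, hθZ, smul_add]; abel
  have hsum : Z + θ Z = 0 := by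
    have := hbrack2.symm.trans hbrack
    exact (smul_eq_zero.mp this).resolve_left hH₀
  have hθZ' : θ Z = -Z := by linear_combination (norm := module) hsum
  have hZa : Z ∈ a := by
    have h2Z : Y = (2 : ℝ) • Z := by
      rw [hYdef, hθZ']; module
    have : Z = (2⁻¹ : ℝ) • Y := by rw [h2Z]; module
    rw [this]
    exact a.smul_mem _ hYaq.1
  have hZ0 : Z = 0 := by
    have h1 : ⁅(H₀ : L), Z⁆ = 0 := ha_ab _ H₀.2 Z hZa
    have h2 := hZ H₀
    rw [h1] at h2
    exact (smul_eq_zero.mp h2.symm).resolve_left hH₀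
  have : X - σ X = 0 := hZ0
  linear_combination (norm := module) -this
end

section
/- Let 0 → E' →(i) E →(p) E'' → 0 be a short exact sequence of finite-dimensional real vector spaces (i injective, p surjective, ker p = range i). For a linear map f : E'' → E with p ∘ f = id_{E''}, let i ⊕ f : E' × E'' → E denote the linear map (x,y) ↦ i(x) + f(y). Then the pullback of densities under i ⊕ f does not depend on the choice of splitting: if f, g : E'' → E are linear maps with p ∘ f = id and p ∘ g = id, then (i ⊕ f)*D = (i ⊕ g)*D for every density D on E. -/
/-- A density on a real vector space `E`, relative to tuple length `n`: a function on
`n`-tuples of vectors transforming by `|det A|` under matrix substitutions. -/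
def IsDensity {E : Type*} [AddCommGroup E] [Module ℝ E] (n : ℕ)
    (D : (Fin n → E) → ℂ) : Prop :=
  ∀ (v : Fin n → E) (A : Matrix (Fin n) (Fin n) ℝ),
    D (fun j => ∑ i, A i j • v i) = |A.det| • D v


lemma det_one_add_of_sq_eq_zero {n : ℕ} (A : Matrix (Fin n) (Fin n) ℝ) (h : A * A = 0) :
    (1 + A).det = 1 := by
  have hnil : IsNilpotent A := ⟨2, by rwa [pow_two]⟩
  have hchar : A.charpoly = Polynomial.X ^ n := by
    have h2 := (Matrix.isNilpotent_charpoly_sub_pow_of_isNilpotent hnil).eq_zero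
    rw [Fintype.card_fin] at h2
    exact sub_eq_zero.mp h2
  have hev := congrArg (Polynomial.eval (-1 : ℝ)) hchar
  rw [Matrix.charpoly, ← Polynomial.coe_evalRingHom, RingHom.map_det] at hev
  have hmap : (Polynomial.evalRingHom (-1 : ℝ)).mapMatrix (Matrix.charmatrix A) = -(1 + A) := by
    ext i j
    by_cases hij : i = j <;>
      · simp [Matrix.charmatrix_apply, hij, Matrix.one_apply, Matrix.diagonal_apply]
        try ring
  rw [hmap, Matrix.det_neg] at hev
  simp only [Polynomial.eval_pow, Polynomial.eval_neg, Polynomial.eval_one, Fintype.card_fin] at hev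
  have hne : ((-1 : ℝ)) ^ n ≠ 0 := by positivity
  field_simp at hev
  simp only [Polynomial.coe_evalRingHom, Polynomial.eval_pow, Polynomial.eval_X] at hev
  exact mul_left_cancel₀ hne (hev.trans (mul_one _).symm)

/-- A density is determined by its value on a basis, via the coordinate matrix. -/
lemma density_eq_det_smul {E : Type*} [AddCommGroup E] [Module ℝ E] {n : ℕ}
    (e : Module.Basis (Fin n) ℝ E) {D : (Fin n → E) → ℂ} (hD : IsDensity n D)
    (w : Fin n → E) :
    D w = |(Matrix.of fun i j => e.repr (w j) i).det| • D (fun i => e i) := by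
  have hw : w = fun j => ∑ i, (Matrix.of fun i j => e.repr (w j) i) i j • e i := by
    funext j
    exact (e.sum_repr (w j)).symm
  nth_rewrite 1 [hw]
  exact hD (fun i => e i) _

/-- A density is invariant under composition with a unipotent endomorphism `1 + N`, `N² = 0`. -/
lemma density_comp_unipotent {E : Type*} [AddCommGroup E] [Module ℝ E]
    [FiniteDimensional ℝ E]
    {D : (Fin (Module.finrank ℝ E) → E) → ℂ} (hD : IsDensity (Module.finrank ℝ E) D)
    (N : E →ₗ[ℝ] E) (hNsq : N.comp N = 0) (w : Fin (Module.finrank ℝ E) → E) :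
    D (fun j => w j + N (w j)) = D w := by
  classical
  let e : Module.Basis (Fin (Module.finrank ℝ E)) ℝ E := Module.finBasis ℝ E
  let S : E →ₗ[ℝ] E := LinearMap.id + N
  let A : Matrix _ _ ℝ := LinearMap.toMatrix e e S
  let Mf : Matrix _ _ ℝ := Matrix.of fun r j => e.repr (w j) r
  have hMgA : (Matrix.of fun r j => e.repr (w j + N (w j)) r) = A * Mf := by
    ext r j
    have hrepr := LinearMap.toMatrix_mulVec_repr e e S (w j)
    have h1 : w j + N (w j) = S (w j) := by
      simp [S, LinearMap.add_apply]
    rw [Matrix.of_apply, h1, ← hrepr]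
    simp [Matrix.mulVec, Matrix.mul_apply, dotProduct, Mf, A]
  have hdetA : A.det = 1 := by
    have hA1 : A = 1 + LinearMap.toMatrix e e N := by
      simp [A, S, map_add, LinearMap.toMatrix_id]
    rw [hA1]
    apply det_one_add_of_sq_eq_zero
    rw [← LinearMap.toMatrix_mul]
    rw [show (N * N : E →ₗ[ℝ] E) = N.comp N from rfl, hNsq]
    simp
  calc D (fun j => w j + N (w j))
      = |(Matrix.of fun r j => e.repr (w j + N (w j)) r).det| • D (fun r => e r) :=
        density_eq_det_smul e hD _
    _ = |Mf.det| • D (fun r => e r) := by rw [hMgA, Matrix.det_mul, hdetA, one_mul]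
    _ = D w := (density_eq_det_smul e hD w).symm

/-- For a short exact sequence `0 → E' → E → E'' → 0` of finite-dimensional real vector
spaces, the pullback of a density on `E` under the map `i ⊕ f : E' × E'' → E`,
`(x,y) ↦ i x + f y`, does not depend on the choice of the splitting `f`. -/
theorem density_pullback_splitting_independent
    {E' E E'' : Type*}
    [AddCommGroup E'] [Module ℝ E'] [FiniteDimensional ℝ E']
    [AddCommGroup E] [Module ℝ E] [FiniteDimensional ℝ E]
    [AddCommGroup E''] [Module ℝ E''] [FiniteDimensional ℝ E'']
    (i : E' →ₗ[ℝ] E) (p : E →ₗ[ℝ] E'')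
    (hi : Function.Injective i) (hp : Function.Surjective p)
    (hexact : LinearMap.ker p = LinearMap.range i)
    (f g : E'' →ₗ[ℝ] E)
    (hf : p.comp f = LinearMap.id) (hg : p.comp g = LinearMap.id)
    (D : (Fin (Module.finrank ℝ E) → E) → ℂ)
    (hD : IsDensity (Module.finrank ℝ E) D) :
    (fun v : Fin (Module.finrank ℝ E) → E' × E'' =>
        D fun j => i (v j).1 + f (v j).2) =
      (fun v : Fin (Module.finrank ℝ E) → E' × E'' =>
        D fun j => i (v j).1 + g (v j).2) := by
  have hpf : ∀ y, p (f y) = y := fun y => congrArg (fun L => L y) hf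
  have hpg : ∀ y, p (g y) = y := fun y => congrArg (fun L => L y) hg
  have hpi : ∀ x, p (i x) = 0 := by
    intro x
    have : i x ∈ LinearMap.ker p := by rw [hexact]; exact ⟨x, rfl⟩
    exact this
  have hmem : ∀ y, (g - f) y ∈ LinearMap.range i := by
    intro y
    rw [← hexact, LinearMap.mem_ker]
    simp [hpf y, hpg y]
  let eqv : E' ≃ₗ[ℝ] LinearMap.range i := LinearEquiv.ofInjective i hi
  let h : E'' →ₗ[ℝ] E' :=
    eqv.symm.toLinearMap.comp ((g - f).codRestrict (LinearMap.range i) hmem)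
  have hih : ∀ y, i (h y) = g y - f y := by
    intro y
    have h1 : ∀ x : E', (eqv x : E) = i x := fun x => rfl
    have h2 : eqv (h y) = ((g - f).codRestrict (LinearMap.range i) hmem) y := by
      simp [h, LinearMap.comp_apply]
    have h3 := congrArg (Subtype.val) h2
    rw [h1] at h3
    simpa using h3
  let N : E →ₗ[ℝ] E := i.comp (h.comp p)
  have hNsq : N.comp N = 0 := by
    ext x
    simp [N, LinearMap.comp_apply, hpi]
  funext v
  have key : (fun j => i (v j).1 + g (v j).2) =
      fun j => (i (v j).1 + f (v j).2) + N (i (v j).1 + f (v j).2) := by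
    funext j
    have : N (i (v j).1 + f (v j).2) = g (v j).2 - f (v j).2 := by
      simp only [N, LinearMap.comp_apply, map_add, hpi, hpf, zero_add, map_zero]
      exact hih _
    rw [this]
    abel
  rw [key, density_comp_unipotent hD N hNsq]
end

section
/- Let E and F be real vector spaces of finite dimensions p and q respectively. For all densities α ∈ 𝒟_E and β ∈ 𝒟_F there is a unique density γ ∈ 𝒟_{E×F} such that for all tuples u : Fin p → E and v : Fin q → F, the value of γ on the (p+q)-tuple in E × F whose first p entries are (u i, 0) and whose last q entries are (0, v j) equals α(u) · β(v). Moreover the map (α, β) ↦ γ is bilinear, and the induced linear map 𝒟_E ⊗ 𝒟_F → 𝒟_{E×F} is a linear isomorphism. -/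
/-- The complex vector space `𝒟_E` of densities on `E` (with tuple length `n`). -/
noncomputable def DensitySpace (E : Type*) [AddCommGroup E] [Module ℝ E] (n : ℕ) :
    Submodule ℂ ((Fin n → E) → ℂ) where
  carrier := {D | IsDensity n D}
  add_mem' := fun hD hD' => by
    intro v A
    simp only [Pi.add_apply, hD v A, hD' v A, smul_add]
  zero_mem' := by
    intro v A
    simp
  smul_mem' := fun c D hD => by
    intro v A
    simp only [Pi.smul_apply, hD v A]
    exact smul_comm c _ _

section Aux

variable {E : Type*} [AddCommGroup E] [Module ℝ E] {n : ℕ}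

lemma toMatrix_transform (b : Module.Basis (Fin n) ℝ E) (v : Fin n → E) (A : Matrix (Fin n) (Fin n) ℝ) :
    b.toMatrix (fun j => ∑ i, A i j • v i) = b.toMatrix v * A := by
  ext k j
  simp [Module.Basis.toMatrix_apply, Matrix.mul_apply, mul_comm]

lemma density_apply (b : Module.Basis (Fin n) ℝ E) (D : DensitySpace E n) (v : Fin n → E) :
    D.1 v = ((|(b.toMatrix v).det| : ℝ) : ℂ) * D.1 ⇑b := by
  have hv : (fun j => ∑ i, b.toMatrix v i j • b i) = v := funext fun j => by
    simp [Module.Basis.toMatrix_apply, b.sum_repr]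
  have h := D.2 ⇑b (b.toMatrix v)
  rw [hv] at h
  rw [h, Complex.real_smul]

lemma stdD_isDensity (b : Module.Basis (Fin n) ℝ E) (c : ℂ) :
    IsDensity n (fun v => ((|(b.toMatrix v).det| : ℝ) : ℂ) * c) := by
  intro v A
  simp only []
  rw [toMatrix_transform, Matrix.det_mul, abs_mul, Complex.real_smul]
  push_cast
  ring

noncomputable def densityEquiv (b : Module.Basis (Fin n) ℝ E) :
    DensitySpace E n ≃ₗ[ℂ] ℂ where
  toFun D := D.1 ⇑b
  map_add' D D' := rfl
  map_smul' c D := rfl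
  invFun c := ⟨fun v => ((|(b.toMatrix v).det| : ℝ) : ℂ) * c, stdD_isDensity b c⟩
  left_inv D := by
    ext v
    exact (density_apply b D v).symm
  right_inv c := by
    simp [Module.Basis.toMatrix_self]

@[simp] lemma densityEquiv_apply (b : Module.Basis (Fin n) ℝ E) (D : DensitySpace E n) :
    densityEquiv b D = D.1 ⇑b := rfl

@[simp] lemma densityEquiv_symm_apply (b : Module.Basis (Fin n) ℝ E) (c : ℂ) (v : Fin n → E) :
    ((densityEquiv b).symm c).1 v = ((|(b.toMatrix v).det| : ℝ) : ℂ) * c := rfl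

variable {F : Type*} [AddCommGroup F] [Module ℝ F] {p q : ℕ}

lemma det_toMatrix_append (bE : Module.Basis (Fin p) ℝ E) (bF : Module.Basis (Fin q) ℝ F)
    (u : Fin p → E) (v : Fin q → F) :
    (((bE.prod bF).reindex finSumFinEquiv).toMatrix
        (Fin.append (fun i => ((u i, 0) : E × F)) (fun j => ((0, v j) : E × F)))).det
      = (bE.toMatrix u).det * (bF.toMatrix v).det := by
  have hM : ((bE.prod bF).reindex finSumFinEquiv).toMatrix
        (Fin.append (fun i => ((u i, 0) : E × F)) (fun j => ((0, v j) : E × F)))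
      = (Matrix.fromBlocks (bE.toMatrix u) 0 0 (bF.toMatrix v)).submatrix
          finSumFinEquiv.symm finSumFinEquiv.symm := by
    ext i j
    obtain ⟨s, rfl⟩ := finSumFinEquiv.surjective i
    obtain ⟨t, rfl⟩ := finSumFinEquiv.surjective j
    rcases s with s | s <;> rcases t with t | t <;>
      simp [Module.Basis.toMatrix_apply, Module.Basis.repr_reindex_apply, finSumFinEquiv_apply_left,
        finSumFinEquiv_apply_right, Fin.append_left, Fin.append_right]
  rw [hM, Matrix.det_submatrix_equiv_self, Matrix.det_fromBlocks_zero₂₁]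

lemma append_basis_eq (bE : Module.Basis (Fin p) ℝ E) (bF : Module.Basis (Fin q) ℝ F) :
    (Fin.append (fun i => ((bE i, 0) : E × F)) (fun j => ((0, bF j) : E × F)))
      = ⇑((bE.prod bF).reindex finSumFinEquiv) := by
  funext k
  obtain ⟨s, rfl⟩ := finSumFinEquiv.surjective k
  rcases s with s | s <;>
    simp [Module.Basis.reindex_apply, finSumFinEquiv_apply_left, finSumFinEquiv_apply_right,
      Fin.append_left, Fin.append_right, Prod.ext_iff]

end Aux

/-- For finite-dimensional real vector spaces `E` (dimension `p`) and `F` (dimension `q`):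
for all densities `α ∈ 𝒟_E`, `β ∈ 𝒟_F` there is a unique density `γ ∈ 𝒟_{E×F}` whose value
on the `(p+q)`-tuple built from `(u i, 0)` and `(0, v j)` is `α(u)·β(v)`; the map
`(α,β) ↦ γ` is bilinear and the induced map `𝒟_E ⊗ 𝒟_F → 𝒟_{E×F}` is a linear isomorphism. -/
theorem density_prod_tensor_iso
    {E F : Type*} [AddCommGroup E] [Module ℝ E] [FiniteDimensional ℝ E]
    [AddCommGroup F] [Module ℝ F] [FiniteDimensional ℝ F] :
    (∀ (α : DensitySpace E (Module.finrank ℝ E))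
        (β : DensitySpace F (Module.finrank ℝ F)),
      ∃! γ : DensitySpace (E × F) (Module.finrank ℝ E + Module.finrank ℝ F),
        ∀ (u : Fin (Module.finrank ℝ E) → E) (v : Fin (Module.finrank ℝ F) → F),
          γ.1 (Fin.append (fun i => ((u i, 0) : E × F)) (fun j => ((0, v j) : E × F)))
            = α.1 u * β.1 v) ∧
    ∃ B : DensitySpace E (Module.finrank ℝ E) →ₗ[ℂ]
        (DensitySpace F (Module.finrank ℝ F) →ₗ[ℂ]
          DensitySpace (E × F) (Module.finrank ℝ E + Module.finrank ℝ F)),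
      (∀ (α : DensitySpace E (Module.finrank ℝ E))
          (β : DensitySpace F (Module.finrank ℝ F))
          (u : Fin (Module.finrank ℝ E) → E) (v : Fin (Module.finrank ℝ F) → F),
        (B α β).1
            (Fin.append (fun i => ((u i, 0) : E × F)) (fun j => ((0, v j) : E × F)))
          = α.1 u * β.1 v) ∧
      Function.Bijective (TensorProduct.lift B) := by
  classical
  set p := Module.finrank ℝ E with hp
  set q := Module.finrank ℝ F with hq
  let bE : Module.Basis (Fin p) ℝ E := Module.finBasis ℝ E
  let bF : Module.Basis (Fin q) ℝ F := Module.finBasis ℝ F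
  let bEF : Module.Basis (Fin (p + q)) ℝ (E × F) := (bE.prod bF).reindex finSumFinEquiv
  let φE := densityEquiv bE
  let φF := densityEquiv bF
  let φ := densityEquiv bEF
  let B : DensitySpace E p →ₗ[ℂ] (DensitySpace F q →ₗ[ℂ] DensitySpace (E × F) (p + q)) :=
    LinearMap.mk₂ ℂ (fun α β => φ.symm (φE α * φF β))
      (fun α α' β => by rw [map_add, add_mul, map_add])
      (fun c α β => by rw [map_smul, smul_mul_assoc, map_smul])
      (fun α β β' => by rw [map_add, mul_add, map_add])
      (fun c α β => by rw [map_smul, mul_smul_comm, map_smul])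
  have hBval : ∀ (α : DensitySpace E p) (β : DensitySpace F q)
      (u : Fin p → E) (v : Fin q → F),
      (B α β).1 (Fin.append (fun i => ((u i, 0) : E × F)) (fun j => ((0, v j) : E × F)))
        = α.1 u * β.1 v := by
    intro α β u v
    have h1 : (B α β).1 (Fin.append (fun i => ((u i, 0) : E × F))
          (fun j => ((0, v j) : E × F)))
        = ((|((bEF.toMatrix (Fin.append (fun i => ((u i, 0) : E × F))
            (fun j => ((0, v j) : E × F)))).det)| : ℝ) : ℂ) * (α.1 ⇑bE * β.1 ⇑bF) := rfl
    rw [h1, det_toMatrix_append bE bF u v, density_apply bE α u, density_apply bF β v,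
      abs_mul]
    push_cast
    ring
  refine ⟨fun α β => ⟨B α β, fun u v => hBval α β u v, fun γ' hγ' => ?_⟩, B, hBval, ?_⟩
  · apply φ.injective
    have h0 := hγ' ⇑bE ⇑bF
    rw [append_basis_eq bE bF] at h0
    have h2 := hBval α β ⇑bE ⇑bF
    rw [append_basis_eq bE bF] at h2
    show γ'.1 ⇑bEF = (B α β).1 ⇑bEF
    rw [h0, h2]
  · let L : (TensorProduct ℂ (DensitySpace E p) (DensitySpace F q)) ≃ₗ[ℂ]
        DensitySpace (E × F) (p + q) :=
      (TensorProduct.congr φE φF).trans ((TensorProduct.lid ℂ ℂ).trans φ.symm)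
    have hL : TensorProduct.lift B = ↑L := by
      apply TensorProduct.ext'
      intro α β
      simp [L, B, TensorProduct.lift.tmul, TensorProduct.congr_tmul, TensorProduct.lid_tmul,
        smul_eq_mul]
    rw [hL]
    exact L.bijective
end
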